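/- Let K_1 : X × X → A and K_2 : S × S → B be positive definite kernels on nonempty sets X and S with values in C*-algebras A and B, and let E_1 and E_2 be their associated reproducing kernel Hilbert C*-modules. Then the tensor product kernel K_1 ⊗ K_2 : (X × S) × (X × S) → A ⊗_* B, (K_1 ⊗ K_2)((x,s),(y,t)) = K_1(x,y) ⊗ K_2(s,t), is positive definite, and the reproducing kernel Hilbert C*-module over A ⊗_* B associated with K_1 ⊗ K_2 is unitarily equivalent to the exterior tensor product E_1 ⊗ E_2, via the unitary determined by k^1_x a ⊗ k^2_s b ↦ k_{(x,s)}·(a ⊗ b). -/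

import Mathlib

open scoped RightActions

/-- The Hilbert C*-module class with the older Mathlib (Dec. 2024) meaning: a complex module `E`
with a *right* `A`-action (via `Aᵐᵒᵖ`) and an `A`-valued inner product. Mathlib's current
`CStarModule` uses a left `A`-action instead. -/
class CStarModuleRight (A E : Type*) [NonUnitalSemiring A] [StarRing A]
    [Module ℂ A] [AddCommGroup E] [Module ℂ E] [PartialOrder A] [SMul Aᵐᵒᵖ E] [Norm A] [Norm E]
    extends Inner A E where
  inner_add_right {x} {y} {z} : inner x (y + z) = inner x y + inner x z
  inner_self_nonneg {x} : 0 ≤ inner x x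
  inner_self {x} : inner x x = 0 ↔ x = 0
  inner_op_smul_right {a : A} {x y : E} : inner x (y <• a) = inner x y * a
  inner_smul_right_complex {z : ℂ} {x} {y} : inner x (z • y) = z • inner x y
  star_inner x y : star (inner x y) = inner y x
  norm_eq_sqrt_norm_inner_self x : ‖x‖ = Real.sqrt ‖inner x x‖

/-- A *reproducing kernel Hilbert C*-module* (RKHC*M) over the C*-algebra `A` on the set `S`:
a Hilbert C*-module `E` over `A` realized (injectively) as a right `A`-submodule of the
`A`-valued functions on `S` via `toFun`, together with kernel elements `k s` such that
evaluation at `s` is given by `f ↦ ⟪k s, f⟫`, and such that the `A`-linear span of the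
`k s` is dense in `E`. -/
structure RKHCM (A : Type*) (S : Type*) (E : Type*)
    [CStarAlgebra A] [PartialOrder A] [StarOrderedRing A]
    [NormedAddCommGroup E] [NormedSpace ℂ E] [SMul Aᵐᵒᵖ E] [CStarModuleRight A E] where
  toFun : E → S → A
  injective : Function.Injective toFun
  k : S → E
  eval_eq : ∀ (f : E) (s : S), toFun f s = inner A (k s) f
  dense_span : Dense
    ((Submodule.span ℂ (Set.range fun p : S × A => k p.1 <• p.2) : Submodule ℂ E) : Set E)

/-- A positive definite `A`-valued kernel on `S`. -/
def IsPosDefKernel {A : Type*} [CStarAlgebra A] [PartialOrder A] [StarOrderedRing A]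
    {S : Type*} (K : S → S → A) : Prop :=
  ∀ (n : ℕ) (s : Fin n → S) (a : Fin n → A),
    0 ≤ ∑ i, ∑ j, star (a i) * K (s i) (s j) * a j

/-- An abstract C*-tensor product of the C*-algebras `A` and `B`: a C*-algebra `C`
together with a bilinear map `tmul : A → B → C` (elementary tensors `a ⊗ b`) which is
multiplicative and star-preserving in both variables jointly, and whose elementary
tensors have dense linear span in `C`. -/
structure CStarTensor (A B C : Type*)
    [CStarAlgebra A] [CStarAlgebra B] [CStarAlgebra C] where
  tmul : A →ₗ[ℂ] B →ₗ[ℂ] C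
  tmul_mul : ∀ (a a' : A) (b b' : B), tmul (a * a') (b * b') = tmul a b * tmul a' b'
  tmul_star : ∀ (a : A) (b : B), star (tmul a b) = tmul (star a) (star b)
  dense_span : Dense
    ((Submodule.span ℂ (Set.range fun p : A × B => tmul p.1 p.2) : Submodule ℂ C) : Set C)

/-- The exterior tensor product of a Hilbert C*-module `E₁` over `A` and a Hilbert
C*-module `E₂` over `B`, relative to the C*-tensor product `T : A ⊗ B = C`: a Hilbert
C*-module `F` over `C` with a bilinear map `tmulE : E₁ → E₂ → F` (elementary tensors)
whose inner products satisfy `⟪x ⊗ y, z ⊗ w⟫ = ⟪x,z⟫ ⊗ ⟪y,w⟫`, compatible with the right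
module actions, and with dense linear span. -/
structure ExtTensorProduct {A B C : Type*}
    [CStarAlgebra A] [CStarAlgebra B] [CStarAlgebra C]
    [PartialOrder A] [StarOrderedRing A] [PartialOrder B] [StarOrderedRing B]
    [PartialOrder C] [StarOrderedRing C]
    (T : CStarTensor A B C) (E₁ E₂ F : Type*)
    [NormedAddCommGroup E₁] [NormedSpace ℂ E₁] [SMul Aᵐᵒᵖ E₁] [CStarModuleRight A E₁]
    [NormedAddCommGroup E₂] [NormedSpace ℂ E₂] [SMul Bᵐᵒᵖ E₂] [CStarModuleRight B E₂]
    [NormedAddCommGroup F] [NormedSpace ℂ F] [SMul Cᵐᵒᵖ F] [CStarModuleRight C F] where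
  tmulE : E₁ →ₗ[ℂ] E₂ →ₗ[ℂ] F
  inner_tmulE : ∀ (x z : E₁) (y w : E₂),
    (inner C (tmulE x y) (tmulE z w) : C) = T.tmul (inner A x z : A) (inner B y w : B)
  tmulE_smul : ∀ (x : E₁) (y : E₂) (a : A) (b : B),
    tmulE (x <• a) (y <• b) = tmulE x y <• T.tmul a b
  dense_span : Dense
    ((Submodule.span ℂ (Set.range fun p : E₁ × E₂ => tmulE p.1 p.2) : Submodule ℂ F) : Set F)


/-! Both Gram kernels — of the `k (x, s)` in `F'` and of the `k¹ x ⊗ k² s` in `F` — equal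
`K₁ ⊗ K₂` (which is therefore positive definite), so `k (x, s) <• c ↦ (k¹ x ⊗ k² s) <• c`
preserves inner products and extends from its dense span to an inner-product-preserving map
`Ψ : F' → F`. Being isometric on a complete space, `Ψ` has closed range, which contains every
`(k¹ x <• a) ⊗ (k² s <• b)`. Positivity of `a ⊗ b` for `a, b ≥ 0` bounds
`‖x ⊗ y‖ ≤ √‖1 ⊗ 1‖ ‖x‖ ‖y‖`, so these elementary tensors span a dense subspace of `F` and
`Ψ` is onto; `Φ = Ψ⁻¹`. -/

namespace CStarModuleRight

variable {A E : Type*} [CStarAlgebra A] [PartialOrder A]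
  [NormedAddCommGroup E] [NormedSpace ℂ E] [SMul Aᵐᵒᵖ E] [CStarModuleRight A E]

lemma inner_add_left {x y z : E} : inner A (x + y) z = inner A x z + inner A y z := by
  rw [← star_inner (A := A) z, inner_add_right, star_add, star_inner, star_inner]

lemma inner_smul_left_complex {z : ℂ} {x y : E} : inner A (z • x) y = star z • inner A x y := by
  rw [← star_inner (A := A) y, inner_smul_right_complex, star_smul, star_inner]

lemma inner_op_smul_left {a : A} {x y : E} : inner A (x <• a) y = star a * inner A x y := by
  rw [← star_inner (A := A) y, inner_op_smul_right, star_mul, star_inner]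

lemma inner_op_smul_op_smul {a b : A} {x y : E} :
    inner A (x <• a) (y <• b) = star a * inner A x y * b := by
  rw [inner_op_smul_left, inner_op_smul_right, mul_assoc]

variable (A E) in
noncomputable def innerₛₗ : E →ₗ⋆[ℂ] E →ₗ[ℂ] A :=
  LinearMap.mk₂'ₛₗ _ _ (fun x y => inner A x y) (fun _ _ _ => inner_add_left)
    (fun _ _ _ => inner_smul_left_complex) (fun _ _ _ => inner_add_right)
    (fun _ _ _ => inner_smul_right_complex)

@[simp]
lemma innerₛₗ_apply (x y : E) : innerₛₗ A E x y = inner A x y := rfl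

lemma inner_zero_left {x : E} : inner A (0 : E) x = 0 := by
  simp [← innerₛₗ_apply]

lemma inner_zero_right {x : E} : inner A x (0 : E) = 0 := by
  simp [← innerₛₗ_apply]

lemma inner_sub_left {x y z : E} : inner A (x - y) z = inner A x z - inner A y z := by
  simp [← innerₛₗ_apply]

lemma inner_sub_right {x y z : E} : inner A x (y - z) = inner A x y - inner A x z := by
  simp [← innerₛₗ_apply]

lemma inner_smul_left_real {r : ℝ} {x y : E} : inner A (r • x) y = r • inner A x y := by
  rw [← Complex.coe_smul r x, inner_smul_left_complex, Complex.star_def, Complex.conj_ofReal,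
    Complex.coe_smul]

lemma inner_smul_right_real {r : ℝ} {x y : E} : inner A x (r • y) = r • inner A x y := by
  rw [← Complex.coe_smul r y, inner_smul_right_complex, Complex.coe_smul]

lemma inner_sum_left {ι : Type*} {s : Finset ι} {x : ι → E} {y : E} :
    inner A (∑ i ∈ s, x i) y = ∑ i ∈ s, inner A (x i) y := by
  simp [← innerₛₗ_apply]

lemma inner_sum_right {ι : Type*} {s : Finset ι} {x : E} {y : ι → E} :
    inner A x (∑ i ∈ s, y i) = ∑ i ∈ s, inner A x (y i) := by
  simp [← innerₛₗ_apply]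

lemma norm_sq_eq (x : E) : ‖x‖ ^ 2 = ‖inner A x x‖ := by
  rw [norm_eq_sqrt_norm_inner_self (A := A) x, Real.sq_sqrt (norm_nonneg _)]

variable {E' : Type*} [NormedAddCommGroup E'] [NormedSpace ℂ E'] [SMul Aᵐᵒᵖ E']
  [CStarModuleRight A E']

lemma norm_eq_norm_of_inner_self_eq {x : E} {y : E'} (h : inner A x x = inner A y y) :
    ‖x‖ = ‖y‖ := by
  rw [norm_eq_sqrt_norm_inner_self (A := A), h, ← norm_eq_sqrt_norm_inner_self]

lemma isometry_of_inner_map_map (Ψ : E →L[ℂ] E')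
    (hΨ : ∀ u v, inner A (Ψ u) (Ψ v) = inner A u v) : Isometry Ψ :=
  AddMonoidHomClass.isometry_of_norm Ψ fun u => norm_eq_norm_of_inner_self_eq (hΨ u u)

lemma inner_linearCombination_eq_of_inner_eq {I : Type*} {g : I → E} {h : I → E'}
    (hgh : ∀ i j, inner A (g i) (g j) = inner A (h i) (h j)) (f f' : I →₀ ℂ) :
    inner A (Finsupp.linearCombination ℂ g f) (Finsupp.linearCombination ℂ g f')
      = inner A (Finsupp.linearCombination ℂ h f) (Finsupp.linearCombination ℂ h f') := by
  have hforms : ((innerₛₗ A E).comp (Finsupp.linearCombination ℂ g)).compl₂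
        (Finsupp.linearCombination ℂ g)
      = ((innerₛₗ A E').comp (Finsupp.linearCombination ℂ h)).compl₂
        (Finsupp.linearCombination ℂ h) :=
    Finsupp.lhom_ext fun i c => Finsupp.lhom_ext fun j d => by simp [hgh]
  exact LinearMap.congr_fun₂ hforms f f'

lemma exists_linearMap_range_linearCombination_inner_map_map {I : Type*} {g : I → E}
    {h : I → E'} (hgh : ∀ i j, inner A (g i) (g j) = inner A (h i) (h j)) :
    ∃ Ψ₀ : LinearMap.range (Finsupp.linearCombination ℂ g) →ₗ[ℂ] E',
      ∀ f, Ψ₀ ⟨_, LinearMap.mem_range_self _ f⟩ = Finsupp.linearCombination ℂ h f := by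
  set L := Finsupp.linearCombination ℂ g
  set M := Finsupp.linearCombination ℂ h
  have hker : LinearMap.ker L ≤ LinearMap.ker M := fun f hf => by
    rw [LinearMap.mem_ker] at hf ⊢
    rw [← inner_self (A := A), ← inner_linearCombination_eq_of_inner_eq hgh, hf,
      inner_zero_right]
  refine ⟨(LinearMap.ker L).liftQ M hker ∘ₗ L.quotKerEquivRange.symm.toLinearMap, fun f => ?_⟩
  simp [LinearMap.quotKerEquivRange_symm_apply_image]

variable [StarOrderedRing A]

lemma inner_mul_inner_swap_le {x y : E} :
    inner A y x * inner A x y ≤ ‖x‖ ^ 2 • inner A y y := by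
  rcases eq_or_ne x 0 with rfl | hx
  · simp [inner_zero_left, inner_zero_right]
  have hx2 : 0 < ‖x‖ ^ 2 := by positivity
  have hstar : star (inner A x y) = inner A y x := star_inner x y
  have hnonneg := inner_self_nonneg (A := A) (x := x <• inner A x y - ‖x‖ ^ 2 • y)
  simp only [inner_sub_left, inner_sub_right, inner_op_smul_left, inner_op_smul_right,
    inner_smul_left_real, inner_smul_right_real, ← hstar, sub_mul,
    smul_mul_assoc, smul_sub] at hnonneg
  have hconj : star (inner A x y) * inner A x x * inner A x y
      ≤ ‖x‖ ^ 2 • (star (inner A x y) * inner A x y) := by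
    rw [norm_sq_eq (A := A)]
    exact CStarAlgebra.star_left_conjugate_le_norm_smul (star_inner x x)
  rw [hstar] at hconj hnonneg
  rw [← smul_le_smul_iff_of_pos_left hx2, ← sub_nonneg]
  calc (0 : A) ≤ _ := hnonneg
    _ ≤ ‖x‖ ^ 2 • (inner A y x * inner A x y) - ‖x‖ ^ 2 • (inner A y x * inner A x y)
        - (‖x‖ ^ 2 • (inner A y x * inner A x y) - ‖x‖ ^ 2 • (‖x‖ ^ 2 • inner A y y)) := by
      gcongr
    _ = _ := by abel

lemma norm_inner_le {x y : E} : ‖inner A x y‖ ≤ ‖x‖ * ‖y‖ := by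
  refine (pow_le_pow_iff_left₀ (norm_nonneg _) (by positivity) two_ne_zero).mp ?_
  calc ‖inner A x y‖ ^ 2 = ‖inner A y x * inner A x y‖ := by
        rw [← star_inner x y, CStarRing.norm_star_mul_self, pow_two]
    _ ≤ ‖‖x‖ ^ 2 • inner A y y‖ := CStarAlgebra.norm_le_norm_of_nonneg_of_le
        (by rw [← star_inner x y]; exact star_mul_self_nonneg _) inner_mul_inner_swap_le
    _ = (‖x‖ * ‖y‖) ^ 2 := by
        rw [norm_smul, Real.norm_of_nonneg (by positivity), ← norm_sq_eq (A := A) y]; ring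

lemma continuous_inner : Continuous fun p : E × E => inner A p.1 p.2 := by
  let B := (innerₛₗ A E).mkContinuous₂ 1 fun x y => by
    simpa only [innerₛₗ_apply, one_mul] using norm_inner_le
  exact (B.continuous.comp continuous_fst).clm_apply continuous_snd

lemma isPosDefKernel_inner {S : Type*} (k : S → E) :
    IsPosDefKernel fun p q => inner A (k p) (k q) := by
  intro n s a
  have hsum : ∑ i, ∑ j, star (a i) * inner A (k (s i)) (k (s j)) * a j
      = inner A (∑ i, k (s i) <• a i) (∑ j, k (s j) <• a j) := by
    simp only [inner_sum_left, inner_sum_right, inner_op_smul_op_smul]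
    exact Finset.sum_comm
  exact hsum ▸ inner_self_nonneg

theorem exists_continuousLinearMap_inner_map_map [CompleteSpace E'] {I : Type*} {g : I → E}
    {h : I → E'} (hg : Dense (Submodule.span ℂ (Set.range g) : Set E))
    (hgh : ∀ i j, inner A (g i) (g j) = inner A (h i) (h j)) :
    ∃ Ψ : E →L[ℂ] E', (∀ u v, inner A (Ψ u) (Ψ v) = inner A u v) ∧ ∀ i, Ψ (g i) = h i := by
  set L := Finsupp.linearCombination ℂ g
  obtain ⟨Ψ₀, hΨ₀⟩ := exists_linearMap_range_linearCombination_inner_map_map hgh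
  have hΨ₀inner : ∀ d d' : LinearMap.range L, inner A (Ψ₀ d) (Ψ₀ d') = inner A (d : E) d' := by
    rintro ⟨_, f, rfl⟩ ⟨_, f', rfl⟩
    rw [hΨ₀, hΨ₀]
    exact (inner_linearCombination_eq_of_inner_eq hgh f f').symm
  let Ψc : LinearMap.range L →L[ℂ] E' := Ψ₀.mkContinuous 1 fun d => by
    rw [one_mul, norm_eq_norm_of_inner_self_eq (hΨ₀inner d d)]; rfl
  have hdense : DenseRange (LinearMap.range L).subtypeL := by
    simpa [DenseRange, L, Finsupp.range_linearCombination] using hg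
  set Ψ := Ψc.extend (LinearMap.range L).subtypeL
  have hΨ : ∀ d : LinearMap.range L, Ψ d = Ψ₀ d :=
    Ψc.extend_eq hdense isUniformEmbedding_subtype_val.isUniformInducing
  have hΨinner : ∀ u v, inner A (Ψ u) (Ψ v) = inner A u v := by
    refine fun u v => hdense.induction_on₂ ?_ (fun d d' => ?_) u v
    · exact isClosed_eq (continuous_inner (A := A).comp (Ψ.continuous.prodMap Ψ.continuous))
        continuous_inner
    · simp only [Submodule.subtypeL_apply, hΨ, hΨ₀inner]
  refine ⟨Ψ, hΨinner, fun i => ?_⟩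
  have := (hΨ ⟨_, LinearMap.mem_range_self L (Finsupp.single i 1)⟩).trans (hΨ₀ _)
  simpa [L] using this

end CStarModuleRight

lemma Submodule.eq_top_of_isClosed_of_dense_span {R M : Type*} [Semiring R] [AddCommMonoid M]
    [Module R M] [TopologicalSpace M] [ContinuousAdd M] [ContinuousConstSMul R M]
    {P : Submodule R M} (hP : IsClosed (P : Set M)) {s : Set M}
    (hs : Dense (Submodule.span R s : Set M)) (hsP : s ⊆ P) : P = ⊤ :=
  top_unique <| (Submodule.dense_iff_topologicalClosure_eq_top.mp hs).ge.trans
    ((Submodule.span R s).topologicalClosure_minimal (Submodule.span_le.mpr hsP) hP)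

namespace CStarTensor

variable {A B C : Type*} [CStarAlgebra A] [CStarAlgebra B] [CStarAlgebra C]
  [PartialOrder A] [StarOrderedRing A] [PartialOrder B] [StarOrderedRing B]
  [PartialOrder C] [StarOrderedRing C] (T : CStarTensor A B C)

lemma tmul_nonneg {a : A} {b : B} (ha : 0 ≤ a) (hb : 0 ≤ b) : 0 ≤ T.tmul a b := by
  have hsqrt : T.tmul a b
      = star (T.tmul (CFC.sqrt a) (CFC.sqrt b)) * T.tmul (CFC.sqrt a) (CFC.sqrt b) := by
    rw [T.tmul_star, (CFC.sqrt_nonneg a).isSelfAdjoint.star_eq,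
      (CFC.sqrt_nonneg b).isSelfAdjoint.star_eq, ← T.tmul_mul,
      CFC.sqrt_mul_sqrt_self a ha, CFC.sqrt_mul_sqrt_self b hb]
  exact hsqrt ▸ star_mul_self_nonneg _

lemma tmul_le_tmul {a a' : A} {b b' : B} (ha : 0 ≤ a) (haa' : a ≤ a') (hb' : 0 ≤ b')
    (hbb' : b ≤ b') : T.tmul a b ≤ T.tmul a' b' := by
  have hsplit : T.tmul a' b' - T.tmul a b = T.tmul (a' - a) b' + T.tmul a (b' - b) := by
    simp only [map_sub, LinearMap.sub_apply]; abel
  rw [← sub_nonneg, hsplit]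
  exact add_nonneg (T.tmul_nonneg (sub_nonneg.mpr haa') hb')
    (T.tmul_nonneg ha (sub_nonneg.mpr hbb'))

lemma norm_tmul_le {a : A} {b : B} (ha : 0 ≤ a) (hb : 0 ≤ b) :
    ‖T.tmul a b‖ ≤ ‖T.tmul 1 1‖ * (‖a‖ * ‖b‖) := by
  have hle : T.tmul a b ≤ (‖a‖ * ‖b‖) • T.tmul 1 1 := by
    calc T.tmul a b ≤ T.tmul (algebraMap ℝ A ‖a‖) (algebraMap ℝ B ‖b‖) :=
          T.tmul_le_tmul ha ha.isSelfAdjoint.le_algebraMap_norm_self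
            (algebraMap_nonneg B (norm_nonneg b)) hb.isSelfAdjoint.le_algebraMap_norm_self
      _ = (‖a‖ * ‖b‖) • T.tmul 1 1 := by
          simp only [Algebra.algebraMap_eq_smul_one, LinearMap.map_smul_of_tower,
            LinearMap.smul_apply, smul_smul]
  calc ‖T.tmul a b‖ ≤ ‖(‖a‖ * ‖b‖) • T.tmul 1 1‖ :=
        CStarAlgebra.norm_le_norm_of_nonneg_of_le (T.tmul_nonneg ha hb) hle
    _ = ‖T.tmul 1 1‖ * (‖a‖ * ‖b‖) := by
        rw [norm_smul, Real.norm_of_nonneg (by positivity), mul_comm]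

end CStarTensor

namespace ExtTensorProduct

variable {A B C : Type*} [CStarAlgebra A] [CStarAlgebra B] [CStarAlgebra C]
  [PartialOrder A] [StarOrderedRing A] [PartialOrder B] [StarOrderedRing B]
  [PartialOrder C] [StarOrderedRing C] {T : CStarTensor A B C} {E₁ E₂ F : Type*}
  [NormedAddCommGroup E₁] [NormedSpace ℂ E₁] [SMul Aᵐᵒᵖ E₁] [CStarModuleRight A E₁]
  [NormedAddCommGroup E₂] [NormedSpace ℂ E₂] [SMul Bᵐᵒᵖ E₂] [CStarModuleRight B E₂]
  [NormedAddCommGroup F] [NormedSpace ℂ F] [SMul Cᵐᵒᵖ F] [CStarModuleRight C F]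
  (ET : ExtTensorProduct T E₁ E₂ F)

lemma norm_tmulE_le (x : E₁) (y : E₂) :
    ‖ET.tmulE x y‖ ≤ √‖T.tmul 1 1‖ * ‖x‖ * ‖y‖ := by
  refine (pow_le_pow_iff_left₀ (norm_nonneg _) (by positivity) two_ne_zero).mp ?_
  calc ‖ET.tmulE x y‖ ^ 2 = ‖T.tmul (inner A x x) (inner B y y)‖ := by
        rw [CStarModuleRight.norm_sq_eq (A := C), ET.inner_tmulE]
    _ ≤ ‖T.tmul 1 1‖ * (‖inner A x x‖ * ‖inner B y y‖) :=
        T.norm_tmul_le CStarModuleRight.inner_self_nonneg CStarModuleRight.inner_self_nonneg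
    _ = (√‖T.tmul 1 1‖ * ‖x‖ * ‖y‖) ^ 2 := by
        rw [← CStarModuleRight.norm_sq_eq, ← CStarModuleRight.norm_sq_eq, mul_pow, mul_pow,
          Real.sq_sqrt (norm_nonneg _), mul_assoc]

noncomputable def tmulEL : E₁ →L[ℂ] E₂ →L[ℂ] F :=
  ET.tmulE.mkContinuous₂ _ ET.norm_tmulE_le

lemma eq_top_of_isClosed {I J : Type*} {g₁ : I → E₁} {g₂ : J → E₂}
    (hg₁ : Dense (Submodule.span ℂ (Set.range g₁) : Set E₁))
    (hg₂ : Dense (Submodule.span ℂ (Set.range g₂) : Set E₂))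
    {P : Submodule ℂ F} (hP : IsClosed (P : Set F)) (hgP : ∀ i j, ET.tmulE (g₁ i) (g₂ j) ∈ P) :
    P = ⊤ := by
  have hleft : ∀ x j, ET.tmulE x (g₂ j) ∈ P := fun x j => by
    have htop : P.comap (ET.tmulEL.flip (g₂ j)).toLinearMap = ⊤ :=
      Submodule.eq_top_of_isClosed_of_dense_span (hP.preimage (ET.tmulEL.flip (g₂ j)).continuous)
        hg₁ (Set.range_subset_iff.mpr fun i => hgP i j)
    exact Submodule.eq_top_iff'.mp htop x
  have hall : ∀ x y, ET.tmulE x y ∈ P := fun x y => by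
    have htop : P.comap (ET.tmulEL x).toLinearMap = ⊤ :=
      Submodule.eq_top_of_isClosed_of_dense_span (hP.preimage (ET.tmulEL x).continuous)
        hg₂ (Set.range_subset_iff.mpr (hleft x))
    exact Submodule.eq_top_iff'.mp htop y
  exact Submodule.eq_top_of_isClosed_of_dense_span hP ET.dense_span
    (Set.range_subset_iff.mpr fun p => hall p.1 p.2)

end ExtTensorProduct

theorem rkhcm_of_tensor_kernel_unitarily_equiv_extTensorProduct_general
    {A B C : Type*} [CStarAlgebra A] [PartialOrder A] [StarOrderedRing A]
    [CStarAlgebra B] [PartialOrder B] [StarOrderedRing B]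
    [CStarAlgebra C] [PartialOrder C] [StarOrderedRing C]
    (T : CStarTensor A B C)
    {X S : Type*}
    {E₁ E₂ F F' : Type*}
    [NormedAddCommGroup E₁] [NormedSpace ℂ E₁] [SMul Aᵐᵒᵖ E₁] [CStarModuleRight A E₁]
    [NormedAddCommGroup E₂] [NormedSpace ℂ E₂] [SMul Bᵐᵒᵖ E₂] [CStarModuleRight B E₂]
    [NormedAddCommGroup F] [NormedSpace ℂ F] [SMul Cᵐᵒᵖ F] [CStarModuleRight C F]
    [CompleteSpace F]
    [NormedAddCommGroup F'] [NormedSpace ℂ F'] [SMul Cᵐᵒᵖ F'] [CStarModuleRight C F']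
    [CompleteSpace F']
    (R₁ : RKHCM A X E₁) (R₂ : RKHCM B S E₂)
    (ET : ExtTensorProduct T E₁ E₂ F)
    (R : RKHCM C (X × S) F')
    (hR : ∀ p q : X × S, (inner C (R.k p) (R.k q) : C) =
      T.tmul (inner A (R₁.k p.1) (R₁.k q.1) : A) (inner B (R₂.k p.2) (R₂.k q.2) : B)) :
    IsPosDefKernel (fun p q : X × S =>
      T.tmul (inner A (R₁.k p.1) (R₁.k q.1) : A) (inner B (R₂.k p.2) (R₂.k q.2) : B)) ∧
    ∃ Φ : F ≃ₗ[ℂ] F',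
      (∀ u v : F, (inner C (Φ u) (Φ v) : C) = inner C u v) ∧
      (∀ (x : X) (s : S) (a : A) (b : B),
        Φ (ET.tmulE (R₁.k x <• a) (R₂.k s <• b)) = R.k (x, s) <• T.tmul a b) := by
  refine ⟨funext₂ hR ▸ CStarModuleRight.isPosDefKernel_inner R.k, ?_⟩
  obtain ⟨Ψ, hΨinner, hΨ⟩ := CStarModuleRight.exists_continuousLinearMap_inner_map_map (A := C)
    (g := fun p : (X × S) × C => R.k p.1 <• p.2)
    (h := fun p => ET.tmulE (R₁.k p.1.1) (R₂.k p.1.2) <• p.2) R.dense_span fun p q => by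
      simp only [CStarModuleRight.inner_op_smul_op_smul, hR, ET.inner_tmulE]
  have hΨiso := CStarModuleRight.isometry_of_inner_map_map Ψ hΨinner
  have hsurj : LinearMap.range Ψ.toLinearMap = ⊤ :=
    ET.eq_top_of_isClosed R₁.dense_span R₂.dense_span
      (P := LinearMap.range Ψ.toLinearMap) hΨiso.isClosedEmbedding.isClosed_range
      fun ⟨x, a⟩ ⟨s, b⟩ => ⟨R.k (x, s) <• T.tmul a b, by
        rw [ET.tmulE_smul]; exact hΨ ((x, s), T.tmul a b)⟩
  let Φ := LinearEquiv.ofBijective Ψ.toLinearMap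
    ⟨hΨiso.injective, LinearMap.range_eq_top.mp hsurj⟩
  refine ⟨Φ.symm, fun u v => ?_, fun x s a b => ?_⟩
  · rw [← hΨinner]
    exact congr_arg₂ (inner C) (Φ.apply_symm_apply u) (Φ.apply_symm_apply v)
  · rw [LinearEquiv.symm_apply_eq, ET.tmulE_smul]
    exact (hΨ ((x, s), T.tmul a b)).symm

/-- the tensor product `K₁ ⊗ K₂` of the reproducing kernels of two
reproducing kernel Hilbert C*-modules `E₁` (over `A`, on `X`) and `E₂` (over `B`, on `S`)
is a positive definite kernel on `X × S` with values in `A ⊗ B`, and the reproducing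
kernel Hilbert C*-module `F'` associated with `K₁ ⊗ K₂` is unitarily equivalent to the
exterior tensor product `F = E₁ ⊗ E₂`, via the unitary determined by
`(k¹ x <• a) ⊗ (k² s <• b) ↦ k (x,s) <• (a ⊗ b)`. -/
theorem rkhcm_of_tensor_kernel_unitarily_equiv_extTensorProduct
    {A B C : Type*} [CStarAlgebra A] [PartialOrder A] [StarOrderedRing A]
    [CStarAlgebra B] [PartialOrder B] [StarOrderedRing B]
    [CStarAlgebra C] [PartialOrder C] [StarOrderedRing C]
    (T : CStarTensor A B C)
    {X S : Type*} [Nonempty X] [Nonempty S]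
    {E₁ E₂ F F' : Type*}
    [NormedAddCommGroup E₁] [NormedSpace ℂ E₁] [SMul Aᵐᵒᵖ E₁] [CStarModuleRight A E₁]
    [CompleteSpace E₁]
    [NormedAddCommGroup E₂] [NormedSpace ℂ E₂] [SMul Bᵐᵒᵖ E₂] [CStarModuleRight B E₂]
    [CompleteSpace E₂]
    [NormedAddCommGroup F] [NormedSpace ℂ F] [SMul Cᵐᵒᵖ F] [CStarModuleRight C F]
    [CompleteSpace F]
    [NormedAddCommGroup F'] [NormedSpace ℂ F'] [SMul Cᵐᵒᵖ F'] [CStarModuleRight C F']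
    [CompleteSpace F']
    (R₁ : RKHCM A X E₁) (R₂ : RKHCM B S E₂)
    (ET : ExtTensorProduct T E₁ E₂ F)
    (R : RKHCM C (X × S) F')
    (hR : ∀ p q : X × S, (inner C (R.k p) (R.k q) : C) =
      T.tmul (inner A (R₁.k p.1) (R₁.k q.1) : A) (inner B (R₂.k p.2) (R₂.k q.2) : B)) :
    IsPosDefKernel (fun p q : X × S =>
      T.tmul (inner A (R₁.k p.1) (R₁.k q.1) : A) (inner B (R₂.k p.2) (R₂.k q.2) : B)) ∧
    ∃ Φ : F ≃ₗ[ℂ] F',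
      (∀ u v : F, (inner C (Φ u) (Φ v) : C) = inner C u v) ∧
      (∀ (x : X) (s : S) (a : A) (b : B),
        Φ (ET.tmulE (R₁.k x <• a) (R₂.k s <• b)) = R.k (x, s) <• T.tmul a b) :=
  rkhcm_of_tensor_kernel_unitarily_equiv_extTensorProduct_general T R₁ R₂ ET R hR
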